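/- arXiv:1604.04013 — 4 statements merged into one kernel-verified Lean document; each statement's English description precedes it below -/
import Mathlib

section
/- Let P₀ be a d×d row-stochastic matrix with invariant probability row vector π₀ satisfying ‖P₀ⁿ − 𝟙⊗π₀‖ ≤ κ₀ ρⁿ for all n ≥ 0 (κ₀ < ∞, ρ ∈ (0,1), ‖·‖ a fixed submultiplicative matrix norm), put A = P₀ᵀ, and let ℰ be a d×d matrix with ℰ𝟙 = 0. Then there exists a constant C′ < ∞, depending only on d, κ₀, ρ, ‖ℰ‖ and a constant C < ∞, such that the following holds: for every ε ∈ (0,1], every t ≥ 0, every sequence of real numbers ζ₀,…,ζ_t with |ζ_i| ≤ ε, and every sequence of d×d matrices A₀,…,A_t, each the transpose of a row-stochastic matrix, of the form A_i = A + ζ_i ℰᵀ + F_i with ‖F_i‖ ≤ C ε², the product Ω_t = A_t A_{t−1} ⋯ A₀ satisfies ‖Ω_t − A^{t+1} − Σ_{i=0}^{t} ζ_i A^{t−i} ℰᵀ Aⁱ‖ ≤ C′ ε². -/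
attribute [local instance] Matrix.linftyOpNormedRing Matrix.linftyOpNormedAlgebra

/-!
Transpose everything: with `P = P₀`, `Pᵢ = Aᵢᵀ` and `Qₛ = P₀ ⋯ Pₛ₋₁`, a sequence with `X₀ = 0`
and `Xₛ₊₁ = Xₛ P + Gₛ` is `Xₛ = ∑ₖ Gₖ P^(s-1-k)`. If `Gₖ` has zero row sums then `Gₖ J = 0`,
so `Gₖ P^m = Gₖ (P^m - J)` has norm at most `κ₀ ρ^m ‖Gₖ‖`, and the geometric series costs only
a factor `κ₀ / (1 - ρ)`. For `Xₛ = Qₛ - P^s` the increments are `Qₛ (Pₛ - P) = O(ε)`; for the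
second-order remainder they are `(Qₛ - P^s) ζₛ ℰ + Qₛ Fₛ = O(ε²)`.
-/

open Finset
open scoped Matrix

section Telescoping

variable {R : Type*}

theorem sum_range_succ_mul_pow [Semiring R] (G : ℕ → R) (P : R) (s : ℕ) :
    ∑ k ∈ range (s + 1), G k * P ^ (s + 1 - 1 - k) =
      (∑ k ∈ range s, G k * P ^ (s - 1 - k)) * P + G s := by
  rw [sum_range_succ, sum_mul, Nat.add_sub_cancel, Nat.sub_self, pow_zero, mul_one]
  congr 1
  refine sum_congr rfl fun k hk => ?_
  have hks := mem_range.mp hk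
  rw [mul_assoc, ← pow_succ, show s - 1 - k + 1 = s - k by omega]

theorem eq_sum_mul_pow_of_eq_mul_add [Semiring R] {X G : ℕ → R} {P : R} (h0 : X 0 = 0)
    (hsucc : ∀ s, X (s + 1) = X s * P + G s) (s : ℕ) :
    X s = ∑ k ∈ range s, G k * P ^ (s - 1 - k) := by
  induction s with
  | zero => simp [h0]
  | succ s ih => rw [hsucc, ih, sum_range_succ_mul_pow]

variable [Ring R] (Pseq : ℕ → R) (P : R)

theorem list_prod_range_sub_pow_eq (s : ℕ) :
    ((List.range s).map Pseq).prod - P ^ s =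
      ∑ k ∈ range s, ((List.range k).map Pseq).prod * (Pseq k - P) * P ^ (s - 1 - k) := by
  refine eq_sum_mul_pow_of_eq_mul_add (X := fun s => ((List.range s).map Pseq).prod - P ^ s)
    (by simp) (fun s => ?_) s
  simp [List.range_succ]
  noncomm_ring

theorem list_prod_range_sub_pow_sub_sum_eq (Eseq : ℕ → R) (s : ℕ) :
    ((List.range s).map Pseq).prod - P ^ s - ∑ i ∈ range s, P ^ i * Eseq i * P ^ (s - 1 - i) =
      ∑ k ∈ range s, ((((List.range k).map Pseq).prod - P ^ k) * Eseq k +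
        ((List.range k).map Pseq).prod * (Pseq k - P - Eseq k)) * P ^ (s - 1 - k) := by
  refine eq_sum_mul_pow_of_eq_mul_add (X := fun s => ((List.range s).map Pseq).prod - P ^ s -
    ∑ i ∈ range s, P ^ i * Eseq i * P ^ (s - 1 - i)) (by simp) (fun s => ?_) s
  rw [sum_range_succ_mul_pow (fun i => P ^ i * Eseq i)]
  simp [List.range_succ]
  noncomm_ring

end Telescoping

theorem sum_range_pow_sub_le {ρ : ℝ} (hρ0 : 0 ≤ ρ) (hρ1 : ρ < 1) (s : ℕ) :
    ∑ k ∈ range s, ρ ^ (s - 1 - k) ≤ 1 / (1 - ρ) := by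
  rw [sum_range_reflect (ρ ^ ·) s, ← Nat.Ico_zero_eq_range, ← pow_zero ρ]
  exact geom_sum_Ico_le_of_lt_one hρ0 hρ1

section GeometricMixing

variable {R : Type*} [NormedRing R] {P J : R} {κ ρ : ℝ}

theorem norm_mul_pow_le_of_mul_eq_zero (hgeo : ∀ n : ℕ, ‖P ^ n - J‖ ≤ κ * ρ ^ n) {M : R}
    (hM : M * J = 0) (n : ℕ) : ‖M * P ^ n‖ ≤ ‖M‖ * (κ * ρ ^ n) := by
  calc ‖M * P ^ n‖ = ‖M * (P ^ n - J)‖ := by rw [mul_sub, hM, sub_zero]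
    _ ≤ ‖M‖ * (κ * ρ ^ n) := (norm_mul_le _ _).trans (by gcongr; exact hgeo n)

theorem norm_sum_mul_pow_le_of_mul_eq_zero (hρ0 : 0 ≤ ρ) (hρ1 : ρ < 1)
    (hgeo : ∀ n : ℕ, ‖P ^ n - J‖ ≤ κ * ρ ^ n) {G : ℕ → R} {g : ℝ} (hg : 0 ≤ g) {s : ℕ}
    (hGJ : ∀ k < s, G k * J = 0) (hG : ∀ k < s, ‖G k‖ ≤ g) :
    ‖∑ k ∈ range s, G k * P ^ (s - 1 - k)‖ ≤ g * (κ / (1 - ρ)) := by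
  have hκ : 0 ≤ κ := by simpa using (norm_nonneg _).trans (hgeo 0)
  calc ‖∑ k ∈ range s, G k * P ^ (s - 1 - k)‖
      ≤ ∑ k ∈ range s, g * κ * ρ ^ (s - 1 - k) := by
        refine (norm_sum_le _ _).trans (sum_le_sum fun k hk => ?_)
        have hks := mem_range.mp hk
        calc ‖G k * P ^ (s - 1 - k)‖ ≤ ‖G k‖ * (κ * ρ ^ (s - 1 - k)) :=
              norm_mul_pow_le_of_mul_eq_zero hgeo (hGJ k hks) _
          _ ≤ g * κ * ρ ^ (s - 1 - k) := by
              rw [← mul_assoc]; gcongr; exact hG k hks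
    _ = g * κ * ∑ k ∈ range s, ρ ^ (s - 1 - k) := (mul_sum _ _ _).symm
    _ ≤ g * κ * (1 / (1 - ρ)) := by gcongr; exact sum_range_pow_sub_le hρ0 hρ1 s
    _ = g * (κ / (1 - ρ)) := by ring

theorem norm_list_prod_range_sub_pow_le (hρ0 : 0 ≤ ρ) (hρ1 : ρ < 1)
    (hgeo : ∀ n : ℕ, ‖P ^ n - J‖ ≤ κ * ρ ^ n) {Pseq : ℕ → R} {B δ : ℝ} (hB : 0 ≤ B)
    (hδ : 0 ≤ δ) {s : ℕ} (hQ : ∀ i < s, ‖((List.range i).map Pseq).prod‖ ≤ B)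
    (hDJ : ∀ i < s, (Pseq i - P) * J = 0) (hD : ∀ i < s, ‖Pseq i - P‖ ≤ δ) :
    ‖((List.range s).map Pseq).prod - P ^ s‖ ≤ B * δ * (κ / (1 - ρ)) := by
  rw [list_prod_range_sub_pow_eq]
  refine norm_sum_mul_pow_le_of_mul_eq_zero hρ0 hρ1 hgeo (mul_nonneg hB hδ)
    (fun k hk => by rw [mul_assoc, hDJ k hk, mul_zero]) fun k hk => ?_
  exact (norm_mul_le _ _).trans (mul_le_mul (hQ k hk) (hD k hk) (norm_nonneg _) hB)

theorem norm_list_prod_range_sub_pow_sub_sum_le (hρ0 : 0 ≤ ρ) (hρ1 : ρ < 1)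
    (hgeo : ∀ n : ℕ, ‖P ^ n - J‖ ≤ κ * ρ ^ n) {Pseq Eseq : ℕ → R} {B η φ : ℝ} {t : ℕ}
    (hQ : ∀ i ≤ t, ‖((List.range i).map Pseq).prod‖ ≤ B)
    (hEJ : ∀ i ≤ t, Eseq i * J = 0) (hFJ : ∀ i ≤ t, (Pseq i - P - Eseq i) * J = 0)
    (hE : ∀ i ≤ t, ‖Eseq i‖ ≤ η) (hF : ∀ i ≤ t, ‖Pseq i - P - Eseq i‖ ≤ φ) :
    ‖((List.range (t + 1)).map Pseq).prod - P ^ (t + 1) -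
        ∑ i ∈ range (t + 1), P ^ i * Eseq i * P ^ (t - i)‖ ≤
      (B * (η + φ) * (κ / (1 - ρ)) * η + B * φ) * (κ / (1 - ρ)) := by
  set Q : ℕ → R := fun i => ((List.range i).map Pseq).prod
  have hB : 0 ≤ B := (norm_nonneg _).trans (hQ 0 t.zero_le)
  have hη : 0 ≤ η := (norm_nonneg _).trans (hE 0 t.zero_le)
  have hφ : 0 ≤ φ := (norm_nonneg _).trans (hF 0 t.zero_le)
  have hK : 0 ≤ κ / (1 - ρ) :=
    div_nonneg (by simpa using (norm_nonneg _).trans (hgeo 0)) (by linarith)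
  have hfirst (k : ℕ) (hk : k ≤ t) : ‖Q k - P ^ k‖ ≤ B * (η + φ) * (κ / (1 - ρ)) := by
    refine norm_list_prod_range_sub_pow_le hρ0 hρ1 hgeo hB (add_nonneg hη hφ)
      (fun i hi => hQ i (by omega)) (fun i hi => ?_) (fun i hi => ?_)
    · rw [← sub_add_cancel (Pseq i - P) (Eseq i), add_mul, hFJ i (by omega), hEJ i (by omega),
        add_zero]
    · rw [← sub_add_cancel (Pseq i - P) (Eseq i), add_comm]
      exact (norm_add_le _ _).trans (add_le_add (hE i (by omega)) (hF i (by omega)))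
  have hident := list_prod_range_sub_pow_sub_sum_eq Pseq P Eseq (t + 1)
  simp only [Nat.add_sub_cancel] at hident
  rw [hident]
  refine norm_sum_mul_pow_le_of_mul_eq_zero hρ0 hρ1 hgeo (s := t + 1) (by positivity)
    (fun k hk => ?_) (fun k hk => ?_)
  · rw [add_mul, mul_assoc, mul_assoc, hEJ k (by omega), hFJ k (by omega), mul_zero, mul_zero,
      add_zero]
  · calc ‖(Q k - P ^ k) * Eseq k + Q k * (Pseq k - P - Eseq k)‖
        ≤ ‖Q k - P ^ k‖ * ‖Eseq k‖ + ‖Q k‖ * ‖Pseq k - P - Eseq k‖ :=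
          (norm_add_le _ _).trans (add_le_add (norm_mul_le _ _) (norm_mul_le _ _))
      _ ≤ B * (η + φ) * (κ / (1 - ρ)) * η + B * φ := by
          gcongr
          exacts [hfirst k (by omega), hE k (by omega), hQ k (by omega), hF k (by omega)]

end GeometricMixing

namespace Matrix

section LinftyOpNorm

attribute [local instance] Matrix.linftyOpSeminormedAddCommGroup

variable {m n α : Type*} [Fintype m] [Fintype n] [SeminormedAddCommGroup α]

theorem linfty_opNorm_le_iff {A : Matrix m n α} {c : ℝ} (hc : 0 ≤ c) :
    ‖A‖ ≤ c ↔ ∀ i, ∑ j, ‖A i j‖ ≤ c := by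
  change ‖fun i => WithLp.toLp 1 (A i)‖ ≤ c ↔ _
  simp [pi_norm_le_iff_of_nonneg hc, PiLp.norm_eq_of_L1]

theorem norm_entry_le_linfty_opNorm (A : Matrix m n α) (i : m) (j : n) : ‖A i j‖ ≤ ‖A‖ :=
  (single_le_sum (fun k _ => norm_nonneg (A i k)) (mem_univ j)).trans
    ((linfty_opNorm_le_iff (norm_nonneg A)).mp le_rfl i)

theorem linfty_opNorm_transpose_le (A : Matrix m n α) : ‖Aᵀ‖ ≤ Fintype.card m * ‖A‖ :=
  (linfty_opNorm_le_iff (by positivity)).mpr fun j =>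
    (sum_le_sum fun i _ => norm_entry_le_linfty_opNorm A i j).trans (by simp)

theorem linfty_opNorm_le_one_of_mem_rowStochastic [DecidableEq n] {M : Matrix n n ℝ}
    (hM : M ∈ rowStochastic ℝ n) : ‖M‖ ≤ 1 :=
  (linfty_opNorm_le_iff zero_le_one).mpr fun i => by
    simp [Real.norm_eq_abs, abs_of_nonneg (nonneg_of_mem_rowStochastic hM),
      sum_row_of_mem_rowStochastic hM i]

end LinftyOpNorm

theorem mul_eq_zero_of_sum_row_eq_zero {l m n α : Type*} [Fintype m] [NonUnitalNonAssocSemiring α]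
    {M : Matrix l m α} {J : Matrix m n α} {v : n → α} (hJ : ∀ i j, J i j = v j)
    (hM : ∀ i, ∑ j, M i j = 0) : M * J = 0 := by
  ext i j
  simp [mul_apply, hJ, ← sum_mul, hM]

theorem norm_list_prod_rowStochastic_sub_pow_sub_sum_le {n : Type*} [Fintype n] [DecidableEq n]
    {P J E : Matrix n n ℝ} {π : n → ℝ} {κ ρ ε φ : ℝ} (hP : ∀ i, ∑ j, P i j = 1)
    (hJ : ∀ i j, J i j = π j) (hρ0 : 0 ≤ ρ) (hρ1 : ρ < 1)
    (hgeo : ∀ k : ℕ, ‖P ^ k - J‖ ≤ κ * ρ ^ k) (hE : ∀ i, ∑ j, E i j = 0) {t : ℕ}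
    {ζ : ℕ → ℝ} (hζ : ∀ i ≤ t, |ζ i| ≤ ε) {Pseq : ℕ → Matrix n n ℝ}
    (hstoch : ∀ i ≤ t, Pseq i ∈ rowStochastic ℝ n) (hF : ∀ i ≤ t, ‖Pseq i - P - ζ i • E‖ ≤ φ) :
    ‖((List.range (t + 1)).map Pseq).prod - P ^ (t + 1) -
        ∑ i ∈ range (t + 1), P ^ i * (ζ i • E) * P ^ (t - i)‖ ≤
      ((‖E‖ * ε + φ) * (κ / (1 - ρ)) * (‖E‖ * ε) + φ) * (κ / (1 - ρ)) := by
  have hQ (i : ℕ) (hi : i ≤ t) : ‖((List.range i).map Pseq).prod‖ ≤ 1 := by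
    refine linfty_opNorm_le_one_of_mem_rowStochastic (Submonoid.list_prod_mem _ ?_)
    simp only [List.mem_map, List.mem_range]
    rintro _ ⟨j, hj, rfl⟩
    exact hstoch j (by omega)
  have hEJ (i : ℕ) (_ : i ≤ t) : ζ i • E * J = 0 := by
    rw [smul_mul_assoc, mul_eq_zero_of_sum_row_eq_zero hJ hE, smul_zero]
  have hFJ (i : ℕ) (hi : i ≤ t) : (Pseq i - P - ζ i • E) * J = 0 :=
    mul_eq_zero_of_sum_row_eq_zero hJ fun a => by
      simp only [sub_apply, smul_apply, smul_eq_mul, sum_sub_distrib, ← mul_sum,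
        sum_row_of_mem_rowStochastic (hstoch i hi), hP, hE]
      ring
  have hEn (i : ℕ) (hi : i ≤ t) : ‖ζ i • E‖ ≤ ‖E‖ * ε := by
    rw [norm_smul, Real.norm_eq_abs, mul_comm]
    exact mul_le_mul_of_nonneg_left (hζ i hi) (norm_nonneg E)
  simpa using norm_list_prod_range_sub_pow_sub_sum_le hρ0 hρ1 hgeo hQ hEJ hFJ hEn hF

end Matrix

theorem stmt4_general (d : ℕ) (P₀ : Matrix (Fin d) (Fin d) ℝ)
    (π₀ : Fin d → ℝ)
    (hP_rows : ∀ i, ∑ j, P₀ i j = 1)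
    (J : Matrix (Fin d) (Fin d) ℝ) (hJ : ∀ i j, J i j = π₀ j)
    (κ₀ : ℝ) (ρ : ℝ) (hρ : ρ ∈ Set.Ioo (0 : ℝ) 1)
    (hgeo : ∀ n : ℕ, ‖P₀ ^ n - J‖ ≤ κ₀ * ρ ^ n)
    (A : Matrix (Fin d) (Fin d) ℝ) (hA : A = P₀.transpose)
    (E : Matrix (Fin d) (Fin d) ℝ) (hE : ∀ i, ∑ j, E i j = 0)
    (C : ℝ) :
    ∃ C' : ℝ, ∀ ε : ℝ, ε ∈ Set.Ioc (0 : ℝ) 1 → ∀ t : ℕ,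
      ∀ ζ : ℕ → ℝ, (∀ i ≤ t, |ζ i| ≤ ε) →
      ∀ Aseq : ℕ → Matrix (Fin d) (Fin d) ℝ,
        (∀ i ≤ t, (∀ a b, 0 ≤ (Aseq i).transpose a b) ∧
          (∀ a, ∑ b, (Aseq i).transpose a b = 1)) →
        (∀ i ≤ t, ‖Aseq i - (A + ζ i • E.transpose)‖ ≤ C * ε ^ 2) →
        ‖((List.range (t + 1)).reverse.map Aseq).prod - A ^ (t + 1) -
            ∑ i ∈ Finset.range (t + 1), ζ i • (A ^ (t - i) * E.transpose * A ^ i)‖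
          ≤ C' * ε ^ 2 := by
  obtain ⟨hρ0, hρ1⟩ := hρ
  set K := κ₀ / (1 - ρ)
  have hK : 0 ≤ K := div_nonneg (by simpa using (norm_nonneg _).trans (hgeo 0)) (by linarith)
  refine ⟨d * ((K * (‖E‖ + d * |C|) * ‖E‖ + d * |C|) * K), ?_⟩
  rintro ε ⟨-, hε1⟩ t ζ hζ Aseq hstoch hF
  have hFT (i : ℕ) (hi : i ≤ t) : ‖(Aseq i)ᵀ - P₀ - ζ i • E‖ ≤ d * |C| * ε ^ 2 := by
    have hT : (Aseq i)ᵀ - P₀ - ζ i • E = (Aseq i - (A + ζ i • Eᵀ))ᵀ := by simp [hA, sub_sub]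
    calc ‖(Aseq i)ᵀ - P₀ - ζ i • E‖ ≤ d * ‖Aseq i - (A + ζ i • Eᵀ)‖ := by
          simpa [hT] using (Aseq i - (A + ζ i • Eᵀ)).linfty_opNorm_transpose_le
      _ ≤ d * (|C| * ε ^ 2) := by gcongr; exact (hF i hi).trans (by gcongr; exact le_abs_self C)
      _ = d * |C| * ε ^ 2 := by ring
  have hbound := Matrix.norm_list_prod_rowStochastic_sub_pow_sub_sum_le hP_rows hJ hρ0.le hρ1
    hgeo hE hζ (fun i hi => Matrix.mem_rowStochastic_iff_sum.mpr (hstoch i hi)) hFT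
  set X := ((List.range (t + 1)).reverse.map Aseq).prod - A ^ (t + 1) -
    ∑ i ∈ Finset.range (t + 1), ζ i • (A ^ (t - i) * Eᵀ * A ^ i)
  have hXT : Xᵀ = ((List.range (t + 1)).map fun j => (Aseq j)ᵀ).prod - P₀ ^ (t + 1) -
      ∑ i ∈ range (t + 1), P₀ ^ i * (ζ i • E) * P₀ ^ (t - i) := by
    simp [X, Matrix.transpose_list_prod, hA, Matrix.transpose_sum, Matrix.transpose_pow,
      List.map_reverse, Function.comp_def, mul_assoc]
  calc ‖X‖ ≤ d * ‖Xᵀ‖ := by simpa using Xᵀ.linfty_opNorm_transpose_le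
    _ ≤ d * (((‖E‖ * ε + d * |C| * ε ^ 2) * K * (‖E‖ * ε) + d * |C| * ε ^ 2) * K) := by
        rw [hXT]; gcongr
    _ = d * ((K * (‖E‖ + d * |C| * ε) * ‖E‖ + d * |C|) * K) * ε ^ 2 := by ring
    _ ≤ d * ((K * (‖E‖ + d * |C|) * ‖E‖ + d * |C|) * K) * ε ^ 2 := by
        gcongr d * ((K * (_ + ?_) * _ + _) * K) * _
        exact mul_le_of_le_one_right (by positivity) hε1

/-- Quantitative form of the first-order product expansion: if `A_i = A + ζ_i ℰᵀ + F_i`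
with `‖F_i‖ ≤ C ε²`, each `A_i` the transpose of a row-stochastic matrix, `|ζ_i| ≤ ε`,
and the powers of `P₀` converge geometrically to `𝟙⊗π₀`, then
`‖A_t⋯A₀ − A^{t+1} − Σ_{i=0}^t ζ_i A^{t−i} ℰᵀ Aⁱ‖ ≤ C′ ε²` uniformly in `t` and `ε ∈ (0,1]`. -/
theorem stmt4 (d : ℕ) (P₀ : Matrix (Fin d) (Fin d) ℝ)
    (π₀ : Fin d → ℝ)
    (hP_nonneg : ∀ i j, 0 ≤ P₀ i j)
    (hP_rows : ∀ i, ∑ j, P₀ i j = 1)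
    (hπ_nonneg : ∀ j, 0 ≤ π₀ j)
    (hπ_sum : ∑ j, π₀ j = 1)
    (hπ_inv : Matrix.vecMul π₀ P₀ = π₀)
    (J : Matrix (Fin d) (Fin d) ℝ) (hJ : ∀ i j, J i j = π₀ j)
    (κ₀ : ℝ) (ρ : ℝ) (hρ : ρ ∈ Set.Ioo (0 : ℝ) 1)
    (hgeo : ∀ n : ℕ, ‖P₀ ^ n - J‖ ≤ κ₀ * ρ ^ n)
    (A : Matrix (Fin d) (Fin d) ℝ) (hA : A = P₀.transpose)
    (E : Matrix (Fin d) (Fin d) ℝ) (hE : ∀ i, ∑ j, E i j = 0)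
    (C : ℝ) :
    ∃ C' : ℝ, ∀ ε : ℝ, ε ∈ Set.Ioc (0 : ℝ) 1 → ∀ t : ℕ,
      ∀ ζ : ℕ → ℝ, (∀ i ≤ t, |ζ i| ≤ ε) →
      ∀ Aseq : ℕ → Matrix (Fin d) (Fin d) ℝ,
        (∀ i ≤ t, (∀ a b, 0 ≤ (Aseq i).transpose a b) ∧
          (∀ a, ∑ b, (Aseq i).transpose a b = 1)) →
        (∀ i ≤ t, ‖Aseq i - (A + ζ i • E.transpose)‖ ≤ C * ε ^ 2) →
        ‖((List.range (t + 1)).reverse.map Aseq).prod - A ^ (t + 1) -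
            ∑ i ∈ Finset.range (t + 1), ζ i • (A ^ (t - i) * E.transpose * A ^ i)‖
          ≤ C' * ε ^ 2 :=
  stmt4_general d P₀ π₀ hP_rows J hJ κ₀ ρ hρ hgeo A hA E hE C
end

section
/- On a probability space let Γ be a random row vector in ℝ^d taking values in the standard basis vectors with ℙ{Γ = eʲ} = π₀(j) for each j, where π₀ is an invariant probability row vector for a d×d row-stochastic matrix P₀ (π₀P₀ = π₀). Let G be a random d×d matrix with entries in {0,1} and each row summing to 1 such that 𝔼[G | σ(Γ)] = P₀ almost surely. Then Δ := Γ(G − P₀) satisfies 𝔼[ΔᵀΔ] = Π₀ − P₀ᵀ Π₀ P₀, where Π₀ = diag(π₀). -/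
/-!
On the event `{Γ = eʲ}` the increment `Δ` is the row `G j` centred at `P₀ j`. That row is
one-hot, and conditioning on `σ(Γ)` shows that its mean on the event is `P₀ j`, so its second
moments there are those of a categorical law: `π₀ j (δₖₗ P₀ j k - P₀ j k P₀ j l)`. Summing over
`j` and using `π₀ P₀ = π₀` in the diagonal term gives `Π₀ - P₀ᵀ Π₀ P₀`.
-/

open MeasureTheory
open scoped Matrix

theorem Matrix.diagonal_sub_transpose_mul_diagonal_mul_apply {R n : Type*} [CommRing R]
    [Fintype n] [DecidableEq n] {π : n → R} {P : Matrix n n R} (hπ : π ᵥ* P = π) (k l : n) :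
    (diagonal π - Pᵀ * diagonal π * P) k l =
      ∑ j, π j * ((if k = l then P j k else 0) - P j k * P j l) := by
  have hπk : ∑ j, π j * P j k = π k := by simpa [vecMul, dotProduct] using congrFun hπ k
  simp only [sub_apply, mul_apply, transpose_apply, diagonal_apply, mul_sub, Finset.sum_sub_distrib]
  congr 1
  · split_ifs with hkl
    · subst hkl; simp [hπk]
    · simp
  · refine Finset.sum_congr rfl fun j _ => ?_
    rw [Finset.sum_eq_single j (by simp_all) (by simp)]
    simp only [if_true]
    ring

theorem MeasureTheory.Integrable.of_zero_or_one {Ω : Type*} [MeasurableSpace Ω] {μ : Measure Ω}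
    [IsFiniteMeasure μ] {f : Ω → ℝ} (hf : Measurable f) (h01 : ∀ ω, f ω = 0 ∨ f ω = 1) :
    Integrable f μ :=
  Integrable.of_bound hf.aestronglyMeasurable 1
    (ae_of_all _ fun ω => by rcases h01 ω with h | h <;> simp [h])

section OneHot

variable {ι : Type*} [Fintype ι] [DecidableEq ι]

theorem mul_eq_ite_of_zero_or_one_of_sum_eq_one {x : ι → ℝ} (h01 : ∀ i, x i = 0 ∨ x i = 1)
    (hsum : ∑ i, x i = 1) (k l : ι) : x k * x l = if k = l then x k else 0 := by
  split_ifs with hkl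
  · subst hkl; rcases h01 k with h | h <;> simp [h]
  · rcases h01 k with hk | hk
    · simp [hk]
    rcases h01 l with hl | hl
    · simp [hl]
    have hnonneg : ∀ i ∈ Finset.univ, 0 ≤ x i := fun i _ => by rcases h01 i with h | h <;> simp [h]
    have := Finset.add_le_sum hnonneg (Finset.mem_univ k) (Finset.mem_univ l) hkl
    linarith

variable {Ω : Type*} {X : Ω → ι → ℝ} (h01 : ∀ ω i, X ω i = 0 ∨ X ω i = 1)
  (hsum : ∀ ω, ∑ i, X ω i = 1) (p : ι → ℝ) (k l : ι)
include h01 hsum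

theorem sub_mul_sub_eq_of_oneHot (ω : Ω) :
    (X ω k - p k) * (X ω l - p l) =
      ((if k = l then 1 else 0) - p l) * X ω k - p k * X ω l + p k * p l := by
  have hkl := mul_eq_ite_of_zero_or_one_of_sum_eq_one (h01 ω) (hsum ω) k l
  split_ifs at hkl ⊢ <;> linear_combination hkl

variable [MeasurableSpace Ω] {μ : Measure Ω} [IsFiniteMeasure μ]
  (hX : ∀ i, Measurable fun ω => X ω i)
include hX

theorem integrable_sub_mul_sub_of_oneHot :
    Integrable (fun ω => (X ω k - p k) * (X ω l - p l)) μ := by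
  simp_rw [sub_mul_sub_eq_of_oneHot h01 hsum]
  have hint i : Integrable (fun ω => X ω i) μ := .of_zero_or_one (hX i) (h01 · i)
  exact (((hint k).const_mul _).sub ((hint l).const_mul _)).add (integrable_const _)

theorem setIntegral_sub_mul_sub_of_oneHot {s : Set Ω}
    (hp : ∀ i, ∫ ω in s, X ω i ∂μ = μ.real s * p i) :
    ∫ ω in s, (X ω k - p k) * (X ω l - p l) ∂μ =
      μ.real s * ((if k = l then p k else 0) - p k * p l) := by
  have hint i : Integrable (fun ω => X ω i) (μ.restrict s) := .of_zero_or_one (hX i) (h01 · i)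
  simp_rw [sub_mul_sub_eq_of_oneHot h01 hsum]
  rw [integral_add _ (integrable_const _), integral_sub, integral_const_mul, integral_const_mul,
    setIntegral_const, hp, hp, smul_eq_mul]
  · split_ifs <;> ring
  · exact (hint k).const_mul _
  · exact (hint l).const_mul _
  · exact ((hint k).const_mul _).sub ((hint l).const_mul _)

end OneHot

theorem setIntegral_eq_measureReal_mul_of_condExp_ae_eq_const {Ω : Type*}
    {m m0 : MeasurableSpace Ω} {μ : Measure Ω} [IsFiniteMeasure μ] (hm : m ≤ m0) {f : Ω → ℝ}
    (hf : Integrable f μ) {c : ℝ} (hc : μ[f|m] =ᵐ[μ] fun _ => c) {s : Set Ω}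
    (hs : MeasurableSet[m] s) : ∫ ω in s, f ω ∂μ = μ.real s * c := by
  rw [← setIntegral_condExp hm hf hs, setIntegral_congr_ae (hm s hs) (hc.mono fun _ h _ => h),
    setIntegral_const, smul_eq_mul]

theorem stmt9_general {Ω : Type*} [m0 : MeasurableSpace Ω] (μ : Measure Ω)
    [IsProbabilityMeasure μ] (d : ℕ)
    (P₀ : Matrix (Fin d) (Fin d) ℝ) (π₀ : Fin d → ℝ)
    (hπ_nonneg : ∀ j, 0 ≤ π₀ j)
    (hπ_inv : Matrix.vecMul π₀ P₀ = π₀)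
    (Γ : Ω → Fin d → ℝ) (hΓ_meas : Measurable Γ)
    (hΓ_basis : ∀ ω, ∃ j : Fin d, Γ ω = Pi.single j 1)
    (hΓ_law : ∀ j : Fin d, μ {ω | Γ ω = Pi.single j 1} = ENNReal.ofReal (π₀ j))
    (G : Ω → Matrix (Fin d) (Fin d) ℝ)
    (hG_meas : ∀ i k, Measurable fun ω => G ω i k)
    (hG01 : ∀ ω i k, G ω i k = 0 ∨ G ω i k = 1)
    (hGrows : ∀ ω i, ∑ k, G ω i k = 1)
    (hcond : ∀ i k,
      μ[fun ω => G ω i k | MeasurableSpace.comap Γ inferInstance] =ᵐ[μ]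
        fun _ => P₀ i k)
    (Δ : Ω → Fin d → ℝ)
    (hΔ : ∀ ω, Δ ω = Matrix.vecMul (Γ ω) (G ω - P₀)) :
    ∀ k l, ∫ ω, Δ ω k * Δ ω l ∂μ =
      (Matrix.diagonal π₀ - P₀.transpose * Matrix.diagonal π₀ * P₀) k l := by
  intro k l
  have hm : MeasurableSpace.comap Γ inferInstance ≤ m0 := hΓ_meas.comap_le
  set A : Fin d → Set Ω := fun j => {ω | Γ ω = Pi.single j 1}
  have hA_comap j : MeasurableSet[MeasurableSpace.comap Γ inferInstance] (A j) :=
    ⟨{Pi.single j 1}, measurableSet_singleton _, rfl⟩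
  have hA j : MeasurableSet (A j) := hm _ (hA_comap j)
  have hA_real j : μ.real (A j) = π₀ j := by
    rw [measureReal_def, hΓ_law, ENNReal.toReal_ofReal (hπ_nonneg j)]
  have hA_disj : Pairwise (Function.onFun Disjoint A) := fun i j hij =>
    Set.disjoint_left.2 fun ω (hi : Γ ω = Pi.single i 1) (hj : Γ ω = Pi.single j 1) => by
      simpa [hij] using congrFun (hi.symm.trans hj) i
  have hA_univ : ⋃ j, A j = Set.univ :=
    Set.eq_univ_of_forall fun ω => Set.mem_iUnion.2 (hΓ_basis ω)
  have hΔ_row j : Set.EqOn (fun ω => Δ ω k * Δ ω l)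
      (fun ω => (G ω j k - P₀ j k) * (G ω j l - P₀ j l)) (A j) := fun ω (hω : Γ ω = _) => by
    simp [hΔ, hω]
  have hmean j i : ∫ ω in A j, G ω j i ∂μ = μ.real (A j) * P₀ j i :=
    setIntegral_eq_measureReal_mul_of_condExp_ae_eq_const hm
      (.of_zero_or_one (hG_meas j i) (hG01 · j i)) (hcond j i) (hA_comap j)
  have hint j : IntegrableOn (fun ω => Δ ω k * Δ ω l) (A j) μ :=
    ((integrable_sub_mul_sub_of_oneHot (hG01 · j) (hGrows · j) (P₀ j) k l
      (hG_meas j)).integrableOn).congr_fun (hΔ_row j).symm (hA j)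
  rw [← setIntegral_univ, ← hA_univ, integral_iUnion_fintype hA hA_disj hint,
    Matrix.diagonal_sub_transpose_mul_diagonal_mul_apply hπ_inv]
  refine Finset.sum_congr rfl fun j _ => ?_
  rw [setIntegral_congr_fun (hA j) (hΔ_row j), setIntegral_sub_mul_sub_of_oneHot (hG01 · j)
    (hGrows · j) (P₀ j) k l (hG_meas j) (hmean j), hA_real]

/-- In the stationary case (`Γ ∼ π₀`, `𝔼[G|σ(Γ)] = P₀`), the martingale difference
`Δ = Γ(G − P₀)` has covariance `𝔼[ΔᵀΔ] = Π₀ − P₀ᵀ Π₀ P₀`, where `Π₀ = diag(π₀)`. -/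
theorem stmt9 {Ω : Type*} [m0 : MeasurableSpace Ω] (μ : Measure Ω)
    [IsProbabilityMeasure μ] (d : ℕ)
    (P₀ : Matrix (Fin d) (Fin d) ℝ) (π₀ : Fin d → ℝ)
    (hP_nonneg : ∀ i j, 0 ≤ P₀ i j)
    (hP_rows : ∀ i, ∑ j, P₀ i j = 1)
    (hπ_nonneg : ∀ j, 0 ≤ π₀ j)
    (hπ_sum : ∑ j, π₀ j = 1)
    (hπ_inv : Matrix.vecMul π₀ P₀ = π₀)
    (Γ : Ω → Fin d → ℝ) (hΓ_meas : Measurable Γ)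
    (hΓ_basis : ∀ ω, ∃ j : Fin d, Γ ω = Pi.single j 1)
    (hΓ_law : ∀ j : Fin d, μ {ω | Γ ω = Pi.single j 1} = ENNReal.ofReal (π₀ j))
    (G : Ω → Matrix (Fin d) (Fin d) ℝ)
    (hG_meas : ∀ i k, Measurable fun ω => G ω i k)
    (hG01 : ∀ ω i k, G ω i k = 0 ∨ G ω i k = 1)
    (hGrows : ∀ ω i, ∑ k, G ω i k = 1)
    (hcond : ∀ i k,
      μ[fun ω => G ω i k | MeasurableSpace.comap Γ inferInstance] =ᵐ[μ]
        fun _ => P₀ i k)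
    (Δ : Ω → Fin d → ℝ)
    (hΔ : ∀ ω, Δ ω = Matrix.vecMul (Γ ω) (G ω - P₀)) :
    ∀ k l, ∫ ω, Δ ω k * Δ ω l ∂μ =
      (Matrix.diagonal π₀ - P₀.transpose * Matrix.diagonal π₀ * P₀) k l :=
  stmt9_general (m0 := m0) μ d P₀ π₀ hπ_nonneg hπ_inv Γ hΓ_meas hΓ_basis hΓ_law G hG_meas hG01
    hGrows hcond Δ hΔ
end

section
/- Let ψ_a and ψ_b be probability measures on a measurable space (E,ℬ) with ψ_a absolutely continuous with respect to ψ_b, and suppose the Radon–Nikodym derivative g = dψ_a/dψ_b satisfies g ∈ L²(ψ_b). Then for every measurable f: E → ℝ with ∫ f dψ_b = 0, ∫ |f| dψ_a < ∞, and 0 < ∫ f² dψ_b < ∞, one has (∫ f dψ_a)² / ∫ f² dψ_b ≤ ∫ (g − 1)² dψ_b, with equality when f = g − 1 (provided ∫ (g−1)² dψ_b > 0). Consequently the supremum defining D̂(ψ_a‖ψ_b) is attained at f̂* = dψ_a/dψ_b − 1, and D̂(ψ_a‖ψ_b) = ½ ∫ (g − 1)² dψ_b. -/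
/-! With `g = dψ_a/dψ_b`, the change of measure `ψ_a(f) = ψ_b(g f)` and `ψ_b(f) = 0` give
`ψ_a(f) = ψ_b(f (g - 1))`, an `L²(ψ_b)` inner product, so the bound is Cauchy–Schwarz.
Since `ψ_b(g) = ψ_a(E) = 1`, the function `g - 1` is itself admissible and attains the bound. -/

open MeasureTheory

theorem sq_integral_mul_le_integral_sq_mul_integral_sq {α : Type*} [MeasurableSpace α]
    {μ : Measure α} {f h : α → ℝ} (hf : MemLp f 2 μ) (hh : MemLp h 2 μ) :
    (∫ x, f x * h x ∂μ) ^ 2 ≤ (∫ x, f x ^ 2 ∂μ) * ∫ x, h x ^ 2 ∂μ := by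
  have inner_toLp : ∀ {u v : α → ℝ} (hu : MemLp u 2 μ) (hv : MemLp v 2 μ),
      inner ℝ hu.toLp hv.toLp = ∫ x, u x * v x ∂μ := fun hu hv => by
    rw [L2.inner_def]
    refine integral_congr_ae ?_
    filter_upwards [hu.coeFn_toLp, hv.coeFn_toLp] with x hux hvx
    rw [hux, hvx, Real.inner_apply]
  simpa only [inner_toLp, sq] using real_inner_mul_inner_self_le hf.toLp hh.toLp

theorem Real.sSup_eq_of_forall_le_of_pos_mem {S : Set ℝ} {c : ℝ} (hc : 0 ≤ c)
    (hle : ∀ r ∈ S, r ≤ c) (hnonneg : ∀ r ∈ S, 0 ≤ r) (hmem : 0 < c → c ∈ S) :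
    sSup S = c := by
  rcases hc.eq_or_lt with rfl | hpos
  · exact le_antisymm (Real.sSup_le hle le_rfl) (Real.sSup_nonneg hnonneg)
  · exact IsGreatest.csSup_eq ⟨hmem hpos, hle⟩

namespace MeasureTheory

variable {α : Type*} [MeasurableSpace α] {μ ν : Measure α}

theorem memLp_toReal_rnDeriv_sub_one [IsFiniteMeasure μ]
    (hg : MemLp (fun x => (ν.rnDeriv μ x).toReal) 2 μ) :
    MemLp (fun x => (ν.rnDeriv μ x).toReal - 1) 2 μ :=
  hg.sub (memLp_const 1)

theorem integral_toReal_rnDeriv_sub_one [IsProbabilityMeasure μ] [IsProbabilityMeasure ν]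
    (hνμ : ν ≪ μ) : ∫ x, ((ν.rnDeriv μ x).toReal - 1) ∂μ = 0 := by
  rw [integral_sub Measure.integrable_toReal_rnDeriv (integrable_const 1),
    Measure.integral_toReal_rnDeriv hνμ]
  simp

theorem integral_eq_integral_mul_toReal_rnDeriv_sub_one [IsFiniteMeasure μ] [SigmaFinite ν]
    (hνμ : ν ≪ μ) (hg : MemLp (fun x => (ν.rnDeriv μ x).toReal) 2 μ) {f : α → ℝ}
    (hf : MemLp f 2 μ) (hf0 : ∫ x, f x ∂μ = 0) :
    ∫ x, f x ∂ν = ∫ x, f x * ((ν.rnDeriv μ x).toReal - 1) ∂μ := by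
  have hfg : Integrable (fun x => f x * ((ν.rnDeriv μ x).toReal - 1)) μ :=
    hf.integrable_mul (memLp_toReal_rnDeriv_sub_one hg)
  calc ∫ x, f x ∂ν = ∫ x, (ν.rnDeriv μ x).toReal * f x ∂μ :=
        (integral_toReal_rnDeriv_mul hνμ).symm
    _ = ∫ x, (f x * ((ν.rnDeriv μ x).toReal - 1) + f x) ∂μ := by congr 1; ext x; ring
    _ = ∫ x, f x * ((ν.rnDeriv μ x).toReal - 1) ∂μ := by
      rw [integral_add hfg (hf.integrable one_le_two), hf0, add_zero]

theorem integrable_toReal_rnDeriv_sub_one [IsFiniteMeasure μ] [SigmaFinite ν] (hνμ : ν ≪ μ)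
    (hg : MemLp (fun x => (ν.rnDeriv μ x).toReal) 2 μ) :
    Integrable (fun x => (ν.rnDeriv μ x).toReal - 1) ν :=
  (integrable_toReal_rnDeriv_mul_iff hνμ).1
    (hg.integrable_mul (memLp_toReal_rnDeriv_sub_one hg))

theorem sq_integral_div_integral_sq_le [IsFiniteMeasure μ] [SigmaFinite ν] (hνμ : ν ≪ μ)
    (hg : MemLp (fun x => (ν.rnDeriv μ x).toReal) 2 μ) {f : α → ℝ}
    (hf : MemLp f 2 μ) (hf0 : ∫ x, f x ∂μ = 0) :
    (∫ x, f x ∂ν) ^ 2 / ∫ x, f x ^ 2 ∂μ ≤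
      ∫ x, ((ν.rnDeriv μ x).toReal - 1) ^ 2 ∂μ := by
  rw [integral_eq_integral_mul_toReal_rnDeriv_sub_one hνμ hg hf hf0]
  refine div_le_of_le_mul₀ (integral_nonneg fun x => sq_nonneg _)
    (integral_nonneg fun x => sq_nonneg _) ?_
  rw [mul_comm]
  exact sq_integral_mul_le_integral_sq_mul_integral_sq hf (memLp_toReal_rnDeriv_sub_one hg)

theorem integral_toReal_rnDeriv_sub_one_eq_integral_sq [IsProbabilityMeasure μ]
    [IsProbabilityMeasure ν] (hνμ : ν ≪ μ)
    (hg : MemLp (fun x => (ν.rnDeriv μ x).toReal) 2 μ) :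
    ∫ x, ((ν.rnDeriv μ x).toReal - 1) ∂ν =
      ∫ x, ((ν.rnDeriv μ x).toReal - 1) ^ 2 ∂μ := by
  simp_rw [integral_eq_integral_mul_toReal_rnDeriv_sub_one hνμ hg
    (memLp_toReal_rnDeriv_sub_one hg) (integral_toReal_rnDeriv_sub_one hνμ), sq]

end MeasureTheory

/-- Cauchy–Schwarz characterization of the quadratic divergence: for `g = dψ_a/dψ_b ∈ L²(ψ_b)`,
every admissible `f` satisfies `(ψ_a(f))²/ψ_b(f²) ≤ ψ_b((g−1)²)`, equality holds at
`f = g − 1`, and hence `D̂(ψ_a‖ψ_b) = ½ ψ_b((g−1)²)`. -/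
theorem stmt11 {E : Type*} [MeasurableSpace E] (ψa ψb : Measure E)
    [IsProbabilityMeasure ψa] [IsProbabilityMeasure ψb]
    (hac : ψa ≪ ψb)
    (g : E → ℝ) (hg : g = fun x => (ψa.rnDeriv ψb x).toReal)
    (hgL2 : MemLp g 2 ψb) :
    (∀ f : E → ℝ, Measurable f → ∫ x, f x ∂ψb = 0 → Integrable f ψa →
        MemLp f 2 ψb → 0 < ∫ x, (f x) ^ 2 ∂ψb →
        (∫ x, f x ∂ψa) ^ 2 / ∫ x, (f x) ^ 2 ∂ψb ≤ ∫ x, (g x - 1) ^ 2 ∂ψb) ∧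
    (0 < ∫ x, (g x - 1) ^ 2 ∂ψb →
        (∫ x, (g x - 1) ∂ψa) ^ 2 / ∫ x, (g x - 1) ^ 2 ∂ψb
          = ∫ x, (g x - 1) ^ 2 ∂ψb) ∧
    (1 / 2 : ℝ) * sSup {r : ℝ | ∃ f : E → ℝ, Measurable f ∧
        (∫ x, f x ∂ψb = 0) ∧ Integrable f ψa ∧ MemLp f 2 ψb ∧
        (0 < ∫ x, (f x) ^ 2 ∂ψb) ∧
        r = (∫ x, f x ∂ψa) ^ 2 / ∫ x, (f x) ^ 2 ∂ψb}
      = (1 / 2 : ℝ) * ∫ x, (g x - 1) ^ 2 ∂ψb := by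
  subst hg
  beta_reduce
  have hnonneg : 0 ≤ ∫ x, ((ψa.rnDeriv ψb x).toReal - 1) ^ 2 ∂ψb :=
    integral_nonneg fun x => sq_nonneg _
  have hattained (hpos : 0 < ∫ x, ((ψa.rnDeriv ψb x).toReal - 1) ^ 2 ∂ψb) :
      (∫ x, ((ψa.rnDeriv ψb x).toReal - 1) ∂ψa) ^ 2 /
          ∫ x, ((ψa.rnDeriv ψb x).toReal - 1) ^ 2 ∂ψb
        = ∫ x, ((ψa.rnDeriv ψb x).toReal - 1) ^ 2 ∂ψb := by
    rw [integral_toReal_rnDeriv_sub_one_eq_integral_sq hac hgL2, sq,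
      mul_div_cancel_right₀ _ hpos.ne']
  refine ⟨fun f _ hf0 _ hf _ => sq_integral_div_integral_sq_le hac hgL2 hf hf0, hattained, ?_⟩
  congr 1
  refine Real.sSup_eq_of_forall_le_of_pos_mem hnonneg ?_ ?_ fun hpos => ?_
  · rintro r ⟨f, -, hf0, -, hf, -, rfl⟩
    exact sq_integral_div_integral_sq_le hac hgL2 hf hf0
  · rintro r ⟨f, -, -, -, -, hfpos, rfl⟩
    exact div_nonneg (sq_nonneg _) hfpos.le
  · exact ⟨fun x => (ψa.rnDeriv ψb x).toReal - 1,
      (Measure.measurable_rnDeriv ψa ψb).ennreal_toReal.sub_const 1,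
      integral_toReal_rnDeriv_sub_one hac, integrable_toReal_rnDeriv_sub_one hac hgL2,
      memLp_toReal_rnDeriv_sub_one hgL2, hpos, (hattained hpos).symm⟩
end

section
/- There exists a convex, increasing function κ: [0,∞) → [0,∞) vanishing only at the origin such that the following holds: for any measurable space (E,ℬ) and any probability measures ψ_a, ψ_b on (E,ℬ) that are mutually absolutely continuous with bounded log-likelihood ratio f* = log(dψ_a/dψ_b), one has |D̂(ψ_a‖ψ_b) − KL(ψ_a‖ψ_b)| ≤ κ(‖f*‖_∞³), where ‖f*‖_∞ denotes the essential supremum of |f*|. -/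
open MeasureTheory

/-- The quadratic approximation to relative entropy (eq. (haD) of the paper):
`D̂(ψ_a‖ψ_b) = ½ sup { ψ_a(f)²/ψ_b(f²) : ψ_b(f) = 0, ψ_a(|f|) < ∞, 0 < ψ_b(f²) < ∞ }`. -/
noncomputable def Dhat {E : Type} [MeasurableSpace E] (ψa ψb : Measure E) : ℝ :=
  (1 / 2 : ℝ) * sSup {r : ℝ | ∃ f : E → ℝ, Measurable f ∧
    (∫ x, f x ∂ψb = 0) ∧ Integrable f ψa ∧
    (0 < ∫ x, (f x) ^ 2 ∂ψb) ∧ Integrable (fun x => (f x) ^ 2) ψb ∧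
    r = (∫ x, f x ∂ψa) ^ 2 / ∫ x, (f x) ^ 2 ∂ψb}

/-- Relative entropy (Kullback–Leibler divergence) `KL(ψ_a‖ψ_b) = ∫ log(dψ_a/dψ_b) dψ_a`. -/
noncomputable def KLdiv {E : Type} [MeasurableSpace E] (ψa ψb : Measure E) : ℝ :=
  ∫ x, Real.log ((ψa.rnDeriv ψb x).toReal) ∂ψa

/-!
With `g = dψ_a/dψ_b` and `t = log g`, `D̂` is half the χ²-divergence `∫ (g - 1)² dψ_b`: for
`ψ_b(f) = 0` one has `ψ_a(f) = ψ_b((g - 1) f)`, so Cauchy–Schwarz bounds the quotient and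
`f = g - 1` attains the bound. The Taylor expansion
`g log g = (g - 1)²/2 + (g - 1) - eᵗ (sinh t - t)` shows that `KL` differs from the same
quantity by `ψ_b[eᵗ (sinh t - t)]`, and the power series of `sinh` gives
`|eᵗ (sinh t - t)| ≤ |t|³/6 · e^{2|t|}`. With `M = ‖t‖_∞` this is at most `κ(M³)` for
`κ(x) = x e^{2x + 2}`, because `M ≤ M³ + 1`.
-/

open Real Set
open scoped Nat ENNReal

namespace Real

lemma sinh_sub_self_le_mul_cosh {t : ℝ} (ht : 0 ≤ t) : sinh t - t ≤ t ^ 3 / 6 * cosh t := by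
  have hs : HasSum (fun n : ℕ => t ^ (2 * (n + 1) + 1) / ((2 * (n + 1) + 1)! : ℝ))
      (sinh t - t) := by
    simpa using (hasSum_nat_add_iff' 1).2 (hasSum_sinh t)
  refine hasSum_le (fun n => ?_) hs ((hasSum_cosh t).mul_left (t ^ 3 / 6))
  have hfac : (6 * (2 * n)! : ℝ) ≤ (2 * (n + 1) + 1)! := by
    have := Nat.le_of_dvd (by positivity) (Nat.factorial_mul_factorial_dvd_factorial_add (2 * n) 3)
    rw [show 2 * (n + 1) + 1 = 2 * n + 3 by ring]
    exact_mod_cast (mul_comm _ _).trans_le this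
  rw [mul_div_assoc', div_le_div_iff₀ (by positivity) (by positivity),
    show t ^ (2 * (n + 1) + 1) = t ^ 3 * t ^ (2 * n) by ring]
  nlinarith [mul_nonneg (pow_nonneg ht 3) (pow_nonneg ht (2 * n))]

lemma abs_sinh_sub_self_le (t : ℝ) : |sinh t - t| ≤ |t| ^ 3 / 6 * cosh t := by
  have key : ∀ s, 0 ≤ s → |sinh s - s| ≤ s ^ 3 / 6 * cosh s := fun s hs => by
    rw [abs_of_nonneg (sub_nonneg.2 (self_le_sinh_iff.2 hs))]
    exact sinh_sub_self_le_mul_cosh hs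
  rcases le_total 0 t with h | h
  · simpa [abs_of_nonneg h] using key t h
  · rw [abs_of_nonpos h]
    simpa [neg_add_eq_sub, abs_sub_comm t] using key (-t) (neg_nonneg.2 h)

lemma exp_mul_cosh_le (t : ℝ) : exp t * cosh t ≤ exp (2 * |t|) := by
  rw [cosh_eq, two_mul, exp_add]
  nlinarith [exp_le_exp.2 (le_abs_self t), exp_le_exp.2 (neg_le_abs t), exp_pos t, exp_pos (-t)]

lemma abs_exp_mul_sinh_sub_self_le {t M : ℝ} (ht : |t| ≤ M) :
    |exp t * (sinh t - t)| ≤ M ^ 3 / 6 * exp (2 * M) := by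
  rw [abs_mul, abs_of_pos (exp_pos t)]
  calc exp t * |sinh t - t| ≤ exp t * (|t| ^ 3 / 6 * cosh t) :=
        mul_le_mul_of_nonneg_left (abs_sinh_sub_self_le t) (exp_pos t).le
    _ = |t| ^ 3 / 6 * (exp t * cosh t) := by ring
    _ ≤ M ^ 3 / 6 * exp (2 * M) := by
        have hexp : exp t * cosh t ≤ exp (2 * M) :=
          (exp_mul_cosh_le t).trans (exp_le_exp.2 (by linarith))
        have hM : 0 ≤ M := (abs_nonneg t).trans ht
        exact mul_le_mul (by gcongr) hexp (by positivity) (by positivity)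

lemma exp_mul_self_eq (t : ℝ) :
    exp t * t = (exp t - 1) ^ 2 / 2 + (exp t - 1) - exp t * (sinh t - t) := by
  rw [sinh_eq, exp_neg]
  field_simp
  ring

end Real

lemma sq_integral_mul_le_integral_sq_mul {α : Type*} [MeasurableSpace α] {μ : Measure α}
    {f g : α → ℝ} (hf : MemLp f 2 μ) (hg : MemLp g 2 μ) :
    (∫ x, f x * g x ∂μ) ^ 2 ≤ (∫ x, f x ^ 2 ∂μ) * ∫ x, g x ^ 2 ∂μ := by
  have inner_toLp : ∀ {u v : α → ℝ} (hu : MemLp u 2 μ) (hv : MemLp v 2 μ),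
      inner ℝ (hu.toLp u) (hv.toLp v) = ∫ x, u x * v x ∂μ := fun hu hv => by
    rw [L2.inner_def]
    refine integral_congr_ae ?_
    filter_upwards [hu.coeFn_toLp, hv.coeFn_toLp] with x hux hvx
    simp [hux, hvx, mul_comm]
  simpa only [inner_toLp, ← sq] using real_inner_mul_inner_self_le (hf.toLp f) (hg.toLp g)

noncomputable def chiSqDiv {E : Type*} [MeasurableSpace E] (μ ν : Measure E) : ℝ :=
  ∫ x, ((μ.rnDeriv ν x).toReal - 1) ^ 2 ∂ν

section
variable {E : Type*} [MeasurableSpace E] {μ ν : Measure E}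

lemma integral_eq_integral_rnDeriv_sub_one_mul [SigmaFinite μ] [IsFiniteMeasure ν] (hμν : μ ≪ ν)
    (hg : MemLp (fun x => (μ.rnDeriv ν x).toReal) 2 ν) {f : E → ℝ} (hf : MemLp f 2 ν)
    (hf₀ : ∫ x, f x ∂ν = 0) :
    ∫ x, f x ∂μ = ∫ x, ((μ.rnDeriv ν x).toReal - 1) * f x ∂ν := by
  have hgf : Integrable (fun x => (μ.rnDeriv ν x).toReal * f x) ν := hg.integrable_mul hf
  simp_rw [sub_one_mul]
  rw [integral_sub hgf (hf.integrable one_le_two), hf₀, sub_zero, ← integral_rnDeriv_smul hμν]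
  rfl

lemma sq_integral_div_le_chiSqDiv [SigmaFinite μ] [IsFiniteMeasure ν] (hμν : μ ≪ ν)
    (hg : MemLp (fun x => (μ.rnDeriv ν x).toReal) 2 ν) {f : E → ℝ} (hf : MemLp f 2 ν)
    (hf₀ : ∫ x, f x ∂ν = 0) (hf₂ : 0 < ∫ x, f x ^ 2 ∂ν) :
    (∫ x, f x ∂μ) ^ 2 / ∫ x, f x ^ 2 ∂ν ≤ chiSqDiv μ ν := by
  rw [div_le_iff₀ hf₂, integral_eq_integral_rnDeriv_sub_one_mul hμν hg hf hf₀]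
  exact sq_integral_mul_le_integral_sq_mul (hg.sub (memLp_const 1)) hf

lemma chiSqDiv_nonneg : 0 ≤ chiSqDiv μ ν := integral_nonneg fun _ => sq_nonneg _

lemma integral_rnDeriv_sub_one_eq_zero [IsProbabilityMeasure μ] [IsProbabilityMeasure ν]
    (hμν : μ ≪ ν) :
    ∫ x, ((μ.rnDeriv ν x).toReal - 1) ∂ν = 0 := by
  rw [integral_sub (Measure.integrable_toReal_rnDeriv) (integrable_const 1),
    Measure.integral_toReal_rnDeriv hμν]
  simp

lemma memLp_rnDeriv_of_abs_llr_le [SigmaFinite μ] [IsFiniteMeasure ν] (hνμ : ν ≪ μ) {M : ℝ}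
    (hM : ∀ᵐ x ∂ν, |llr μ ν x| ≤ M) (p : ℝ≥0∞) :
    MemLp (fun x => (μ.rnDeriv ν x).toReal) p ν := by
  refine .of_bound (Measure.measurable_rnDeriv μ ν).ennreal_toReal.aestronglyMeasurable (exp M) ?_
  filter_upwards [exp_llr_of_ac' μ ν hνμ, hM] with x hx hxM
  rw [← hx, norm_of_nonneg (exp_pos _).le]
  exact exp_le_exp.2 (le_of_abs_le hxM)

lemma ae_norm_exp_llr_mul_sinh_sub_llr_le {M : ℝ} (hM : ∀ᵐ x ∂ν, |llr μ ν x| ≤ M) :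
    ∀ᵐ x ∂ν, ‖exp (llr μ ν x) * (sinh (llr μ ν x) - llr μ ν x)‖ ≤ M ^ 3 / 6 * exp (2 * M) := by
  filter_upwards [hM] with x hx
  exact abs_exp_mul_sinh_sub_self_le hx

end

section
variable {E : Type} [MeasurableSpace E] {ψa ψb : Measure E}
  [IsProbabilityMeasure ψa] [IsProbabilityMeasure ψb]

lemma Dhat_eq_half_chiSqDiv (hab : ψa ≪ ψb)
    (hg : MemLp (fun x => (ψa.rnDeriv ψb x).toReal) 2 ψb) :
    Dhat ψa ψb = chiSqDiv ψa ψb / 2 := by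
  set h : E → ℝ := fun x => (ψa.rnDeriv ψb x).toReal - 1
  have hh : MemLp h 2 ψb := hg.sub (memLp_const 1)
  have hh₀ : ∫ x, h x ∂ψb = 0 := integral_rnDeriv_sub_one_eq_zero hab
  have upper : ∀ r ∈ {r : ℝ | ∃ f : E → ℝ, Measurable f ∧
    (∫ x, f x ∂ψb = 0) ∧ Integrable f ψa ∧
    (0 < ∫ x, (f x) ^ 2 ∂ψb) ∧ Integrable (fun x => (f x) ^ 2) ψb ∧
    r = (∫ x, f x ∂ψa) ^ 2 / ∫ x, (f x) ^ 2 ∂ψb}, r ≤ chiSqDiv ψa ψb := by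
    rintro r ⟨f, hfm, hf₀, -, hf₂, hf₂i, rfl⟩
    exact sq_integral_div_le_chiSqDiv hab hg
      ((memLp_two_iff_integrable_sq hfm.aestronglyMeasurable).2 hf₂i) hf₀ hf₂
  unfold Dhat
  rw [one_div_mul_eq_div]
  congr 1
  refine le_antisymm (Real.sSup_le upper (chiSqDiv_nonneg (μ := ψa))) ?_
  rcases (chiSqDiv_nonneg (μ := ψa) (ν := ψb)).eq_or_lt with h0 | hpos
  · rw [← h0]
    exact Real.sSup_nonneg fun r ⟨f, _, _, _, hf₂, _, hr⟩ => hr ▸ by positivity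
  refine le_csSup ⟨_, upper⟩ ⟨h, ?_, hh₀, ?_, hpos, hh.integrable_sq, ?_⟩
  · exact (Measure.measurable_rnDeriv ψa ψb).ennreal_toReal.sub measurable_const
  · exact (integrable_toReal_rnDeriv_mul_iff hab).1 (hg.integrable_mul hh)
  · rw [integral_eq_integral_rnDeriv_sub_one_mul hab hg hh hh₀]
    have hχ : ∫ x, h x ^ 2 ∂ψb = chiSqDiv ψa ψb := rfl
    have hsq : (fun x => ((ψa.rnDeriv ψb x).toReal - 1) * h x) = fun x => h x ^ 2 :=
      funext fun x => (sq _).symm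
    rw [hsq, hχ, sq, mul_div_assoc, div_self hpos.ne', mul_one]

lemma KLdiv_eq_half_chiSqDiv_sub (hab : ψa ≪ ψb) (hba : ψb ≪ ψa) {M : ℝ}
    (hM : ∀ᵐ x ∂ψb, |llr ψa ψb x| ≤ M) :
    KLdiv ψa ψb = chiSqDiv ψa ψb / 2 -
      ∫ x, exp (llr ψa ψb x) * (sinh (llr ψa ψb x) - llr ψa ψb x) ∂ψb := by
  have hg := memLp_rnDeriv_of_abs_llr_le hba hM 2
  have hR : Integrable (fun x => exp (llr ψa ψb x) * (sinh (llr ψa ψb x) - llr ψa ψb x)) ψb :=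
    .of_bound (by fun_prop) _ (ae_norm_exp_llr_mul_sinh_sub_llr_le hM)
  have hh : Integrable (fun x => (ψa.rnDeriv ψb x).toReal - 1) ψb :=
    Measure.integrable_toReal_rnDeriv.sub (integrable_const 1)
  have hh₂ : Integrable (fun x => ((ψa.rnDeriv ψb x).toReal - 1) ^ 2 / 2) ψb :=
    (hg.sub (memLp_const 1)).integrable_sq.div_const 2
  have hq : Integrable (fun x => ((ψa.rnDeriv ψb x).toReal - 1) ^ 2 / 2 +
      ((ψa.rnDeriv ψb x).toReal - 1)) ψb := hh₂.add hh
  calc KLdiv ψa ψb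
      = ∫ x, (ψa.rnDeriv ψb x).toReal * log (ψa.rnDeriv ψb x).toReal ∂ψb :=
        (integral_rnDeriv_mul_log hab).symm
    _ = ∫ x, (((ψa.rnDeriv ψb x).toReal - 1) ^ 2 / 2 + ((ψa.rnDeriv ψb x).toReal - 1) -
          exp (llr ψa ψb x) * (sinh (llr ψa ψb x) - llr ψa ψb x)) ∂ψb := by
        refine integral_congr_ae ?_
        filter_upwards [exp_llr_of_ac' ψa ψb hba] with x hx
        rw [← hx, log_exp, exp_mul_self_eq]
    _ = _ := by
        rw [integral_sub hq hR, integral_add hh₂ hh, integral_div,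
          integral_rnDeriv_sub_one_eq_zero hab, add_zero]
        rfl

lemma abs_Dhat_sub_KLdiv_le (hab : ψa ≪ ψb) (hba : ψb ≪ ψa) {M : ℝ}
    (hM : ∀ᵐ x ∂ψb, |llr ψa ψb x| ≤ M) :
    |Dhat ψa ψb - KLdiv ψa ψb| ≤ M ^ 3 / 6 * exp (2 * M) := by
  rw [Dhat_eq_half_chiSqDiv hab (memLp_rnDeriv_of_abs_llr_le hba hM 2),
    KLdiv_eq_half_chiSqDiv_sub hab hba hM, sub_sub_cancel]
  simpa using norm_integral_le_of_norm_le_const (ae_norm_exp_llr_mul_sinh_sub_llr_le hM)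

end

lemma convexOn_mul_exp_mul_add {a : ℝ} (ha : 0 ≤ a) (b : ℝ) :
    ConvexOn ℝ (Ici 0) fun x => x * exp (a * x + b) := by
  have hexp : ConvexOn ℝ (Ici 0) fun x => exp (a * x + b) := by
    refine ⟨convex_Ici 0, fun x _ y _ s t hs ht hst => ?_⟩
    have := convexOn_exp.2 (mem_univ (a * x + b)) (mem_univ (a * y + b)) hs ht hst
    simp only [smul_eq_mul] at this ⊢
    convert this using 2
    linear_combination (-b) * hst
  have hmono : MonotoneOn (fun x => exp (a * x + b)) (Ici 0) := fun x _ y _ hxy =>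
    exp_le_exp.2 (by gcongr)
  exact (convexOn_id (convex_Ici 0)).mul hexp (fun x hx => hx) (fun x _ => (exp_pos _).le)
    ((monotoneOn_id).monovaryOn hmono)

lemma monotoneOn_mul_exp_mul_add {a : ℝ} (ha : 0 ≤ a) (b : ℝ) :
    MonotoneOn (fun x => x * exp (a * x + b)) (Ici 0) := fun x hx y _ hxy =>
  mul_le_mul hxy (exp_le_exp.2 (by gcongr)) (exp_pos _).le (le_trans hx hxy)

/-- There is a convex, increasing function `κ` vanishing only at the origin such that for
all mutually absolutely continuous probability measures with bounded log-likelihood ratio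
`f* = log(dψ_a/dψ_b)`, `|D̂(ψ_a‖ψ_b) − KL(ψ_a‖ψ_b)| ≤ κ(‖f*‖_∞³)`. -/
theorem stmt14 :
    ∃ κ : ℝ → ℝ, ConvexOn ℝ (Set.Ici (0 : ℝ)) κ ∧ MonotoneOn κ (Set.Ici (0 : ℝ)) ∧
      κ 0 = 0 ∧ (∀ x : ℝ, 0 < x → 0 < κ x) ∧
      ∀ (E : Type) (_ : MeasurableSpace E) (ψa ψb : Measure E),
        IsProbabilityMeasure ψa → IsProbabilityMeasure ψb →
        ψa ≪ ψb → ψb ≪ ψa →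
        eLpNormEssSup (fun x => Real.log ((ψa.rnDeriv ψb x).toReal)) ψb ≠ ⊤ →
        |Dhat ψa ψb - KLdiv ψa ψb| ≤
          κ ((eLpNormEssSup
              (fun x => Real.log ((ψa.rnDeriv ψb x).toReal)) ψb).toReal ^ 3) := by
  refine ⟨fun x => x * exp (2 * x + 2), convexOn_mul_exp_mul_add zero_le_two 2,
    monotoneOn_mul_exp_mul_add zero_le_two 2, by simp, fun x hx => by positivity, ?_⟩
  intro E _ ψa ψb _ _ hab hba hfin
  set M := (eLpNormEssSup (fun x => Real.log ((ψa.rnDeriv ψb x).toReal)) ψb).toReal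
  have hM : ∀ᵐ x ∂ψb, |llr ψa ψb x| ≤ M := by
    filter_upwards [ae_le_eLpNormEssSup (f := llr ψa ψb) (μ := ψb)] with x hx
    simpa using ENNReal.toReal_mono hfin hx
  have hM₀ : 0 ≤ M := ENNReal.toReal_nonneg
  calc |Dhat ψa ψb - KLdiv ψa ψb| ≤ M ^ 3 / 6 * exp (2 * M) := abs_Dhat_sub_KLdiv_le hab hba hM
    _ ≤ M ^ 3 * exp (2 * M ^ 3 + 2) := by
        have hcube : M ≤ M ^ 3 + 1 := by nlinarith [mul_nonneg hM₀ (sq_nonneg (M - 1))]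
        gcongr
        · linarith [pow_nonneg hM₀ 3]
        · linarith
end
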